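/- Let Φ : ℝ^N → ℝ^P have unit Euclidean-norm columns φ₁,…,φ_N, let I ⊆ {1,…,N} with k = |I| ≥ 1, and let x₀ ∈ ℝ^N with supp(x₀) = I. Assume (φ_i)_{i∈I} is linearly independent and (k−1)·μ(Φ) < 1, where μ(Φ) = max_{i≠j} |⟨φ_i,φ_j⟩| is the mutual coherence. Define IC(x₀) = ‖Φ_{I^c}^⊤ Φ_I (Φ_I^⊤Φ_I)^{-1} sign(x₀)_I‖_∞, ERC(I) = max_{j∉I} ‖(Φ_I^⊤Φ_I)^{-1} Φ_I^⊤ φ_j‖₁, and wERC(I) = (max_{j∈I^c} Σ_{i∈I} |⟨φ_i,φ_j⟩|) / (1 − max_{j∈I} Σ_{i∈I, i≠j} |⟨φ_i,φ_j⟩|). Then IC(x₀) ≤ ERC(I) ≤ wERC(I) ≤ k·μ(Φ)/(1 − (k−1)·μ(Φ)). -/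

import Mathlib

/-!
With unit columns, the Gram matrix `G = Φ_Iᵀ Φ_I` is the identity plus a matrix whose columns
have ℓ¹ norm at most `δ = max_{j ∈ I} Σ_{i ∈ I, i ≠ j} |⟨φ_i, φ_j⟩| ≤ (k - 1) μ < 1`. Hence
`‖G v‖₁ ≥ (1 - δ) ‖v‖₁`, so `G` is invertible and
`‖G⁻¹ Φ_Iᵀ φ_j‖₁ ≤ Σ_{i ∈ I} |⟨φ_i, φ_j⟩| / (1 - δ)`, which is `ERC ≤ wERC`.
Since `G⁻¹` is symmetric, the `j`-th entry of the IC vector is `⟨G⁻¹ Φ_Iᵀ φ_j, sign(x₀)_I⟩`,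
bounded by `‖G⁻¹ Φ_Iᵀ φ_j‖₁`. The last inequality bounds every correlation by `μ`.
-/

open Matrix

/-- Euclidean dot product on `ℝ^n`. -/
noncomputable def dotp {n : ℕ} (u v : Fin n → ℝ) : ℝ := ∑ i, u i * v i

/-- Euclidean (ℓ²) norm on `ℝ^n`. -/
noncomputable def nrm2 {n : ℕ} (u : Fin n → ℝ) : ℝ := Real.sqrt (∑ i, (u i) ^ 2)

/-- ℓ¹ norm on `ℝ^n`. -/
noncomputable def l1norm {n : ℕ} (u : Fin n → ℝ) : ℝ := ∑ i, |u i|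

/-- ℓ^∞ norm of a finitely indexed real vector. -/
noncomputable def linf {ι : Type*} [Fintype ι] (u : ι → ℝ) : ℝ := ⨆ i, |u i|

/-- The sign function: 1 for positive, -1 for negative, 0 at 0. -/
noncomputable def sgn (t : ℝ) : ℝ := if 0 < t then 1 else if t < 0 then -1 else 0

/-- Subdifferential of a finite-valued function `J : ℝ^n → ℝ` at `x`:
`∂J(x) = {η : J(x+δ) ≥ J(x) + ⟨η,δ⟩ for all δ}`. -/
def subdiff {n : ℕ} (J : (Fin n → ℝ) → ℝ) (x : Fin n → ℝ) : Set (Fin n → ℝ) :=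
  {η | ∀ δ, J x + dotp η δ ≤ J (x + δ)}

/-- The model tangent subspace `T_x = Lin(∂J(x))^⊥`, where `Lin(E)` is the linear
space parallel to the affine hull of `E`. -/
def modelT {n : ℕ} (J : (Fin n → ℝ) → ℝ) (x : Fin n → ℝ) : Set (Fin n → ℝ) :=
  {u | ∀ v ∈ (affineSpan ℝ (subdiff J x)).direction, dotp u v = 0}

/-- Support of `x` as a finite set of indices. -/
noncomputable def suppF {n : ℕ} (x : Fin n → ℝ) : Finset (Fin n) :=
  Finset.univ.filter fun i => x i ≠ 0

/-- The submatrix `Φ_I` of columns of `Φ` indexed by `I`. -/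
noncomputable def colsub {N P : ℕ} (Φ : Matrix (Fin P) (Fin N) ℝ) (I : Finset (Fin N)) :
    Matrix (Fin P) ↥I ℝ := Φ.submatrix id (↑)

/-- The vector `p_F = Φ_I (Φ_I^⊤ Φ_I)⁻¹ s` for a sign vector `s` on `I`. -/
noncomputable def pFvec {N P : ℕ} (Φ : Matrix (Fin P) (Fin N) ℝ) (I : Finset (Fin N))
    (s : ↥I → ℝ) : Fin P → ℝ :=
  (colsub Φ I).mulVec ((((colsub Φ I)ᵀ * (colsub Φ I))⁻¹).mulVec s)

/-- The irrepresentable-condition quantity `‖Φ_{I^c}^⊤ Φ_I (Φ_I^⊤Φ_I)⁻¹ s‖_∞`. -/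
noncomputable def ICval {N P : ℕ} (Φ : Matrix (Fin P) (Fin N) ℝ) (I : Finset (Fin N))
    (s : ↥I → ℝ) : ℝ :=
  linf ((Φ.submatrix id ((↑) : {j // j ∉ I} → Fin N))ᵀ.mulVec (pFvec Φ I s))

/-- ℓ¹ norm of a finitely indexed real vector. -/
noncomputable def l1g {ι : Type*} [Fintype ι] (v : ι → ℝ) : ℝ := ∑ i, |v i|

/-- Mutual coherence `μ(Φ) = max_{i ≠ j} |⟨φ_i, φ_j⟩|`. -/
noncomputable def mutualCoherence {N P : ℕ} (Φ : Matrix (Fin P) (Fin N) ℝ) : ℝ :=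
  ⨆ p : {q : Fin N × Fin N // q.1 ≠ q.2}, |dotp (Φᵀ p.val.1) (Φᵀ p.val.2)|

/-- Exact Recovery Condition `ERC(I) = max_{j ∉ I} ‖(Φ_I^⊤Φ_I)⁻¹ Φ_I^⊤ φ_j‖₁`. -/
noncomputable def ERCval {N P : ℕ} (Φ : Matrix (Fin P) (Fin N) ℝ) (I : Finset (Fin N)) : ℝ :=
  ⨆ j : {j // j ∉ I},
    l1g ((((colsub Φ I)ᵀ * (colsub Φ I))⁻¹).mulVec ((colsub Φ I)ᵀ.mulVec (Φᵀ (j : Fin N))))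

/-- Weak Exact Recovery Condition
`wERC(I) = (max_{j∉I} Σ_{i∈I} |⟨φ_i,φ_j⟩|) / (1 − max_{j∈I} Σ_{i∈I, i≠j} |⟨φ_i,φ_j⟩|)`. -/
noncomputable def wERCval {N P : ℕ} (Φ : Matrix (Fin P) (Fin N) ℝ) (I : Finset (Fin N)) : ℝ :=
  (⨆ j : {j // j ∉ I}, ∑ i ∈ I, |dotp (Φᵀ i) (Φᵀ (j : Fin N))|) /
    (1 - ⨆ j : ↥I, ∑ i ∈ I.erase (j : Fin N), |dotp (Φᵀ i) (Φᵀ (j : Fin N))|)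

open Finset

section L1Estimates

variable {ι κ : Type*} [Fintype ι] [Fintype κ]

lemma l1g_nonneg (u : ι → ℝ) : 0 ≤ l1g u := sum_nonneg fun _ _ => abs_nonneg _

@[simp] lemma l1g_zero : l1g (0 : ι → ℝ) = 0 := by simp [l1g]

lemma l1g_eq_zero {u : ι → ℝ} : l1g u = 0 ↔ u = 0 := by
  simp [l1g, sum_eq_zero_iff_of_nonneg, funext_iff]

lemma l1g_sub_le (u w : ι → ℝ) : l1g (u - w) ≤ l1g u + l1g w := by
  unfold l1g
  rw [← sum_add_distrib]
  exact sum_le_sum fun _ _ => abs_sub _ _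

lemma abs_dotProduct_le_l1g {u s : ι → ℝ} (hs : ∀ i, |s i| ≤ 1) : |u ⬝ᵥ s| ≤ l1g u :=
  calc |u ⬝ᵥ s| ≤ ∑ i, |u i * s i| := abs_sum_le_sum_abs _ _
    _ ≤ ∑ i, |u i| := sum_le_sum fun i _ => by
        rw [abs_mul]; exact mul_le_of_le_one_right (abs_nonneg _) (hs i)

lemma l1g_mulVec_le (A : Matrix ι κ ℝ) {c : ℝ} (hA : ∀ j, ∑ i, |A i j| ≤ c) (v : κ → ℝ) :
    l1g (A *ᵥ v) ≤ c * l1g v :=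
  calc l1g (A *ᵥ v) ≤ ∑ i, ∑ j, |A i j| * |v j| :=
        sum_le_sum fun i _ => (abs_sum_le_sum_abs _ _).trans_eq (by simp_rw [abs_mul])
    _ = ∑ j, (∑ i, |A i j|) * |v j| := by rw [sum_comm]; simp_rw [sum_mul]
    _ ≤ ∑ j, c * |v j| := sum_le_sum fun j _ => mul_le_mul_of_nonneg_right (hA j) (abs_nonneg _)
    _ = c * l1g v := (mul_sum _ _ _).symm

variable [DecidableEq ι]

lemma one_sub_mul_l1g_le_l1g_mulVec (G : Matrix ι ι ℝ) {c : ℝ}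
    (hG : ∀ j, ∑ i, |(G - 1) i j| ≤ c) (v : ι → ℝ) : (1 - c) * l1g v ≤ l1g (G *ᵥ v) := by
  have hv : v = G *ᵥ v - (G - 1) *ᵥ v := by simp [Matrix.sub_mulVec]
  have := (l1g_sub_le (G *ᵥ v) ((G - 1) *ᵥ v)).trans
    (add_le_add_right (l1g_mulVec_le _ hG v) _)
  rw [← hv] at this
  linarith

/-- The estimate above makes `G *ᵥ ·` injective, so `G⁻¹` here is a true inverse. -/
lemma one_sub_mul_l1g_inv_mulVec_le (G : Matrix ι ι ℝ) {c : ℝ}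
    (hG : ∀ j, ∑ i, |(G - 1) i j| ≤ c) (hc : c < 1) (b : ι → ℝ) :
    (1 - c) * l1g (G⁻¹ *ᵥ b) ≤ l1g b := by
  have hG_unit : IsUnit G := by
    refine Matrix.mulVec_injective_iff_isUnit.mp fun u w huw => sub_eq_zero.mp ?_
    have h0 := one_sub_mul_l1g_le_l1g_mulVec G hG (u - w)
    rw [Matrix.mulVec_sub, huw, sub_self, l1g_zero] at h0
    exact l1g_eq_zero.mp (le_antisymm (nonpos_of_mul_nonpos_right h0 (sub_pos.mpr hc))
      (l1g_nonneg _))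
  have hGinv : G * G⁻¹ = 1 :=
    Matrix.mul_nonsing_inv G ((Matrix.isUnit_iff_isUnit_det G).mp hG_unit)
  simpa [Matrix.mulVec_mulVec, hGinv] using one_sub_mul_l1g_le_l1g_mulVec G hG (G⁻¹ *ᵥ b)

end L1Estimates

lemma dotProduct_mulVec_gram_inv {m n : Type*} [Fintype m] [Fintype n] [DecidableEq n]
    (A : Matrix m n ℝ) (x : m → ℝ) (s : n → ℝ) :
    x ⬝ᵥ A *ᵥ ((Aᵀ * A)⁻¹ *ᵥ s) = ((Aᵀ * A)⁻¹ *ᵥ (Aᵀ *ᵥ x)) ⬝ᵥ s := by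
  have hsymm : (Aᵀ * A)⁻¹ᵀ = (Aᵀ * A)⁻¹ := by
    rw [Matrix.transpose_nonsing_inv, Matrix.transpose_mul, Matrix.transpose_transpose]
  rw [Matrix.dotProduct_mulVec, Matrix.dotProduct_mulVec, ← Matrix.mulVec_transpose,
    ← Matrix.mulVec_transpose, hsymm]

section Dictionary

lemma dotp_self_of_nrm2_eq_one {n : ℕ} {u : Fin n → ℝ} (hu : nrm2 u = 1) : dotp u u = 1 := by
  simpa [nrm2, dotp, sq] using hu

variable {N P : ℕ} (Φ : Matrix (Fin P) (Fin N) ℝ) (I : Finset (Fin N))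

noncomputable def outerCorrelation : ℝ :=
  ⨆ j : {j // j ∉ I}, ∑ i ∈ I, |dotp (Φᵀ i) (Φᵀ (j : Fin N))|

noncomputable def innerCorrelation : ℝ :=
  ⨆ j : ↥I, ∑ i ∈ I.erase (j : Fin N), |dotp (Φᵀ i) (Φᵀ (j : Fin N))|

lemma wERCval_eq : wERCval Φ I = outerCorrelation Φ I / (1 - innerCorrelation Φ I) := rfl

lemma mutualCoherence_nonneg : 0 ≤ mutualCoherence Φ :=
  Real.iSup_nonneg fun _ => abs_nonneg _

variable {Φ} in
lemma abs_dotp_le_mutualCoherence {i j : Fin N} (h : i ≠ j) :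
    |dotp (Φᵀ i) (Φᵀ j)| ≤ mutualCoherence Φ :=
  le_ciSup (f := fun p : {q : Fin N × Fin N // q.1 ≠ q.2} => |dotp (Φᵀ p.val.1) (Φᵀ p.val.2)|)
    (Finite.bddAbove_range _) ⟨(i, j), h⟩

lemma outerCorrelation_nonneg : 0 ≤ outerCorrelation Φ I :=
  Real.iSup_nonneg fun _ => sum_nonneg fun _ _ => abs_nonneg _

lemma outerCorrelation_le : outerCorrelation Φ I ≤ #I * mutualCoherence Φ := by
  refine Real.iSup_le (fun j => ?_) (mul_nonneg (Nat.cast_nonneg _) (mutualCoherence_nonneg Φ))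
  calc ∑ i ∈ I, |dotp (Φᵀ i) (Φᵀ (j : Fin N))| ≤ ∑ _i ∈ I, mutualCoherence Φ :=
        sum_le_sum fun i hi => abs_dotp_le_mutualCoherence fun hij => j.2 (hij ▸ hi)
    _ = #I * mutualCoherence Φ := by rw [sum_const, nsmul_eq_mul]

lemma innerCorrelation_le (hI : I.Nonempty) :
    innerCorrelation Φ I ≤ (#I - 1 : ℝ) * mutualCoherence Φ := by
  have : Nonempty I := hI.to_subtype
  refine ciSup_le fun j => ?_
  calc ∑ i ∈ I.erase (j : Fin N), |dotp (Φᵀ i) (Φᵀ (j : Fin N))|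
      ≤ ∑ _i ∈ I.erase (j : Fin N), mutualCoherence Φ :=
        sum_le_sum fun i hi => abs_dotp_le_mutualCoherence (ne_of_mem_erase hi)
    _ = (#I - 1 : ℝ) * mutualCoherence Φ := by
        rw [sum_const, card_erase_of_mem j.2, nsmul_eq_mul, Nat.cast_pred (card_pos.mpr hI)]

lemma gram_apply (i i' : ↥I) :
    ((colsub Φ I)ᵀ * colsub Φ I) i i' = dotp (Φᵀ (i : Fin N)) (Φᵀ (i' : Fin N)) := rfl

lemma l1g_colsub_transpose_mulVec (j : Fin N) :
    l1g ((colsub Φ I)ᵀ *ᵥ Φᵀ j) = ∑ i ∈ I, |dotp (Φᵀ i) (Φᵀ j)| :=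
  sum_coe_sort I fun i => |dotp (Φᵀ i) (Φᵀ j)|

end Dictionary

section RecoveryConditions

variable {N P : ℕ} {Φ : Matrix (Fin P) (Fin N) ℝ} (I : Finset (Fin N))

lemma sum_abs_gram_sub_one_le (hunit : ∀ j, nrm2 (Φᵀ j) = 1) (j : ↥I) :
    ∑ i, |((colsub Φ I)ᵀ * colsub Φ I - 1 : Matrix ↥I ↥I ℝ) i j| ≤ innerCorrelation Φ I := by
  have hcol : ∑ i, |((colsub Φ I)ᵀ * colsub Φ I - 1 : Matrix ↥I ↥I ℝ) i j|
      = ∑ i ∈ I.erase (j : Fin N), |dotp (Φᵀ i) (Φᵀ (j : Fin N))| := by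
    have hsub (i : ↥I) : ((colsub Φ I)ᵀ * colsub Φ I - 1 : Matrix ↥I ↥I ℝ) i j
        = dotp (Φᵀ (i : Fin N)) (Φᵀ (j : Fin N)) - if (i : Fin N) = j then 1 else 0 := by
      rw [Matrix.sub_apply, gram_apply, Matrix.one_apply]
      simp only [Subtype.ext_iff]
    simp_rw [hsub]
    rw [sum_coe_sort I fun i => |dotp (Φᵀ i) (Φᵀ (j : Fin N)) - if i = j then 1 else 0|,
      ← add_sum_erase I _ j.2]
    rw [if_pos rfl, dotp_self_of_nrm2_eq_one (hunit j), sub_self, abs_zero, zero_add]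
    exact sum_congr rfl fun i hi => by rw [if_neg (ne_of_mem_erase hi), sub_zero]
  rw [hcol]
  exact le_ciSup (f := fun j : ↥I => ∑ i ∈ I.erase (j : Fin N), |dotp (Φᵀ i) (Φᵀ (j : Fin N))|)
    (Finite.bddAbove_range _) j

lemma ERCval_le_wERCval (hunit : ∀ j, nrm2 (Φᵀ j) = 1) (hinner : innerCorrelation Φ I < 1) :
    ERCval Φ I ≤ wERCval Φ I := by
  have hden : 0 < 1 - innerCorrelation Φ I := sub_pos.mpr hinner
  rw [wERCval_eq]
  refine Real.iSup_le (fun j => ?_) (div_nonneg (outerCorrelation_nonneg Φ I) hden.le)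
  rw [le_div_iff₀' hden]
  refine (one_sub_mul_l1g_inv_mulVec_le _ (sum_abs_gram_sub_one_le I hunit) hinner _).trans ?_
  rw [l1g_colsub_transpose_mulVec]
  exact le_ciSup (f := fun j : {j // j ∉ I} => ∑ i ∈ I, |dotp (Φᵀ i) (Φᵀ (j : Fin N))|)
    (Finite.bddAbove_range _) j

lemma ICval_le_ERCval {s : ↥I → ℝ} (hs : ∀ i, |s i| ≤ 1) : ICval Φ I s ≤ ERCval Φ I := by
  refine ciSup_mono (Finite.bddAbove_range _) fun j => ?_
  change |Φᵀ (j : Fin N) ⬝ᵥ pFvec Φ I s| ≤ _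
  rw [pFvec, dotProduct_mulVec_gram_inv]
  exact abs_dotProduct_le_l1g hs

lemma wERCval_le (hI : I.Nonempty) (hmu : ((#I : ℝ) - 1) * mutualCoherence Φ < 1) :
    wERCval Φ I ≤ #I * mutualCoherence Φ / (1 - ((#I : ℝ) - 1) * mutualCoherence Φ) := by
  rw [wERCval_eq]
  have hinner := innerCorrelation_le Φ I hI
  exact div_le_div₀ (mul_nonneg (Nat.cast_nonneg _) (mutualCoherence_nonneg Φ))
    (outerCorrelation_le Φ I) (by linarith) (by linarith)

end RecoveryConditions

lemma abs_sgn_le_one (t : ℝ) : |sgn t| ≤ 1 := by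
  unfold sgn
  split_ifs <;> simp

theorem stmt11_general {N P : ℕ} (Φ : Matrix (Fin P) (Fin N) ℝ) (I : Finset (Fin N))
    (x₀ : Fin N → ℝ)
    (hcard : 1 ≤ I.card)
    (hunit : ∀ j, nrm2 (Φᵀ j) = 1)
    (hmu : ((I.card : ℝ) - 1) * mutualCoherence Φ < 1) :
    ICval Φ I (fun i => sgn (x₀ i)) ≤ ERCval Φ I ∧
    ERCval Φ I ≤ wERCval Φ I ∧
    wERCval Φ I ≤
      (I.card : ℝ) * mutualCoherence Φ / (1 - ((I.card : ℝ) - 1) * mutualCoherence Φ) := by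
  have hI : I.Nonempty := card_pos.mp hcard
  have hinner : innerCorrelation Φ I < 1 := (innerCorrelation_le Φ I hI).trans_lt hmu
  exact ⟨ICval_le_ERCval I fun i => abs_sgn_le_one _, ERCval_le_wERCval I hunit hinner,
    wERCval_le I hI hmu⟩

/-- ordered upper bounds
`IC(x₀) ≤ ERC(I) ≤ wERC(I) ≤ kμ/(1−(k−1)μ)` for unit-norm columns. -/
theorem stmt11 {N P : ℕ} (Φ : Matrix (Fin P) (Fin N) ℝ) (I : Finset (Fin N))
    (x₀ : Fin N → ℝ) (hsupp : ∀ i, x₀ i ≠ 0 ↔ i ∈ I)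
    (hcard : 1 ≤ I.card)
    (hunit : ∀ j, nrm2 (Φᵀ j) = 1)
    (hli : LinearIndependent ℝ (fun i : ↥I => Φᵀ (i : Fin N)))
    (hmu : ((I.card : ℝ) - 1) * mutualCoherence Φ < 1) :
    ICval Φ I (fun i => sgn (x₀ i)) ≤ ERCval Φ I ∧
    ERCval Φ I ≤ wERCval Φ I ∧
    wERCval Φ I ≤
      (I.card : ℝ) * mutualCoherence Φ / (1 - ((I.card : ℝ) - 1) * mutualCoherence Φ) :=
  stmt11_general Φ I x₀ hcard hunit hmu
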